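/- For a linear additive model f(x) = Σ_{i∈N} w_i u_i(x_i) with positive weights summing to 1 and each u_i attaining both 0 and 1, the Contextual Importance is additive over disjoint coalitions of features: for any instance x, any nonempty I ⊆ N, and any disjoint sets A, B ⊆ I, ω_{A∪B,I}(x) = ω_{A,I}(x) + ω_{B,I}(x). -/

import Mathlib

/-!
A linear additive model is additively separable, `f y = ∑ i, g i (y i)`. Since the features
range independently, the extremes of `f` over the instances agreeing with `x` outside `S` are
attained feature by feature, so `ymax_S − ymin_S = ∑ i ∈ S, (max g i − min g i)`. This spread is
additive over disjoint coalitions, and `ω_{S,I}` divides it by a denominator independent of `S`.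
-/

set_option linter.unusedSectionVars false

open Finset

variable {N : Type*} [Fintype N] [DecidableEq N]
variable {X : N → Type*} [∀ i, Fintype (X i)] [∀ i, DecidableEq (X i)] [∀ i, Nonempty (X i)]

/-- The instances that agree with `x` on every feature outside `S`. -/
def varies (x : ∀ i, X i) (S : Finset N) : Finset (∀ i, X i) :=
  Finset.univ.filter (fun y => ∀ j ∉ S, y j = x j)

theorem varies_nonempty (x : ∀ i, X i) (S : Finset N) : (varies x S).Nonempty :=
  ⟨x, by simp [varies]⟩

/-- `ymin_S(x)`: the minimum of `f` over all instances agreeing with `x` outside `S`. -/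
noncomputable def ymin (f : (∀ i, X i) → ℝ) (x : ∀ i, X i) (S : Finset N) : ℝ :=
  (varies x S).inf' (varies_nonempty x S) f

/-- `ymax_S(x)`: the maximum of `f` over all instances agreeing with `x` outside `S`. -/
noncomputable def ymax (f : (∀ i, X i) → ℝ) (x : ∀ i, X i) (S : Finset N) : ℝ :=
  (varies x S).sup' (varies_nonempty x S) f

/-- Contextual Importance `ω_{S,I}(x)`. -/
noncomputable def CI (f : (∀ i, X i) → ℝ) (x : ∀ i, X i) (S I : Finset N) : ℝ :=
  (ymax f x S - ymin f x S) / (ymax f x I - ymin f x I)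

/-- Contextual Utility `CU_S(x)`. -/
noncomputable def CU (f : (∀ i, X i) → ℝ) (x : ∀ i, X i) (S : Finset N) : ℝ :=
  (f x - ymin f x S) / (ymax f x S - ymin f x S)

/-- Contextual influence `φ_{S,I}(x) = ω_{S,I}(x)·(CU_S(x) − φ₀)`. -/
noncomputable def Cinfl (f : (∀ i, X i) → ℝ) (x : ∀ i, X i) (S I : Finset N) (φ₀ : ℝ) : ℝ :=
  CI f x S I * (CU f x S - φ₀)

lemma piecewise_mem_varies (z x : ∀ i, X i) (S : Finset N) : S.piecewise z x ∈ varies x S :=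
  mem_filter.mpr ⟨mem_univ _, fun _ hj => S.piecewise_eq_of_notMem z x hj⟩

lemma sum_eq_of_mem_varies (g : ∀ i, X i → ℝ) {x y : ∀ i, X i} {S : Finset N}
    (hy : y ∈ varies x S) :
    ∑ i, g i (y i) = ∑ i ∈ S, g i (y i) + ∑ i ∈ Sᶜ, g i (x i) := by
  rw [← sum_add_sum_compl S]
  congr 1
  refine sum_congr rfl fun i hi => ?_
  rw [(mem_filter.mp hy).2 i (mem_compl.mp hi)]

lemma sum_piecewise_eq (g : ∀ i, X i → ℝ) (z x : ∀ i, X i) (S : Finset N) :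
    ∑ i, g i (S.piecewise z x i) = ∑ i ∈ S, g i (z i) + ∑ i ∈ Sᶜ, g i (x i) := by
  rw [sum_eq_of_mem_varies g (piecewise_mem_varies z x S)]
  congr 1
  exact sum_congr rfl fun i hi => by rw [S.piecewise_eq_of_mem z x hi]

lemma ymax_sum_eq (g : ∀ i, X i → ℝ) (x : ∀ i, X i) (S : Finset N) :
    ymax (fun y => ∑ i, g i (y i)) x S
      = ∑ i ∈ S, univ.sup' univ_nonempty (g i) + ∑ i ∈ Sᶜ, g i (x i) := by
  choose z _ hz using fun i => exists_mem_eq_sup' (univ_nonempty (α := X i)) (g i)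
  apply le_antisymm
  · refine sup'_le _ _ fun y hy => ?_
    rw [sum_eq_of_mem_varies g hy]
    gcongr with i
    exact le_sup' (g i) (mem_univ _)
  · calc ∑ i ∈ S, univ.sup' univ_nonempty (g i) + ∑ i ∈ Sᶜ, g i (x i)
        = ∑ i, g i (S.piecewise z x i) := by simp only [hz, sum_piecewise_eq]
      _ ≤ _ := le_sup' (fun y => ∑ i, g i (y i)) (piecewise_mem_varies z x S)

lemma ymin_sum_eq (g : ∀ i, X i → ℝ) (x : ∀ i, X i) (S : Finset N) :
    ymin (fun y => ∑ i, g i (y i)) x S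
      = ∑ i ∈ S, univ.inf' univ_nonempty (g i) + ∑ i ∈ Sᶜ, g i (x i) := by
  choose z _ hz using fun i => exists_mem_eq_inf' (univ_nonempty (α := X i)) (g i)
  apply le_antisymm
  · calc _ ≤ ∑ i, g i (S.piecewise z x i) :=
          inf'_le (fun y => ∑ i, g i (y i)) (piecewise_mem_varies z x S)
      _ = _ := by simp only [hz, sum_piecewise_eq]
  · refine le_inf' _ _ fun y hy => ?_
    rw [sum_eq_of_mem_varies g hy]
    gcongr with i
    exact inf'_le (g i) (mem_univ _)

lemma ymax_sub_ymin_sum (g : ∀ i, X i → ℝ) (x : ∀ i, X i) (S : Finset N) :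
    ymax (fun y => ∑ i, g i (y i)) x S - ymin (fun y => ∑ i, g i (y i)) x S
      = ∑ i ∈ S, (univ.sup' univ_nonempty (g i) - univ.inf' univ_nonempty (g i)) := by
  rw [ymax_sum_eq, ymin_sum_eq, sum_sub_distrib]
  ring

lemma CI_union_of_disjoint_of_eq_sum (g : ∀ i, X i → ℝ) {f : (∀ i, X i) → ℝ}
    (hf : ∀ y, f y = ∑ i, g i (y i)) (x : ∀ i, X i) (I : Finset N) {A B : Finset N}
    (hAB : Disjoint A B) :
    CI f x (A ∪ B) I = CI f x A I + CI f x B I := by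
  obtain rfl : f = fun y => ∑ i, g i (y i) := funext hf
  simp only [CI, ymax_sub_ymin_sum, sum_union hAB, add_div]

theorem CI_additive_disjoint_general
    (w : N → ℝ) (u : ∀ i, X i → ℝ) (f : (∀ i, X i) → ℝ)
    (hf : ∀ y, f y = ∑ i, w i * u i (y i))
    (x : ∀ i, X i) (I : Finset N)
    (A B : Finset N) (hAB : Disjoint A B) :
    CI f x (A ∪ B) I = CI f x A I + CI f x B I :=
  CI_union_of_disjoint_of_eq_sum (fun i t => w i * u i t) hf x I hAB

/-- For a linear additive model, Contextual Importance is additive over disjoint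
coalitions of features. -/
theorem CI_additive_disjoint
    (w : N → ℝ) (u : ∀ i, X i → ℝ) (f : (∀ i, X i) → ℝ)
    (hw : ∀ i, 0 < w i) (hwsum : ∑ i, w i = 1)
    (hu01 : ∀ i t, u i t ∈ Set.Icc (0 : ℝ) 1)
    (hu0 : ∀ i, ∃ t, u i t = 0) (hu1 : ∀ i, ∃ t, u i t = 1)
    (hf : ∀ y, f y = ∑ i, w i * u i (y i))
    (x : ∀ i, X i) (I : Finset N) (hI : I.Nonempty)
    (A B : Finset N) (hA : A ⊆ I) (hB : B ⊆ I) (hAB : Disjoint A B) :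
    CI f x (A ∪ B) I = CI f x A I + CI f x B I :=
  CI_additive_disjoint_general w u f hf x I A B hAB
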